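/- For α ∈ (0,1), β with Re β ≥ 0, and ρ > 0, for every nonnegative integer k there exists a constant c > 0 such that the k-th derivative of the function m(λ) = (λ² + ρ²)^{-β/2} e^{i(λ²+ρ²)^{α/2}} satisfies |∂^k m(λ)| ≤ c (1 + λ²)^{-k(1-α)/2} for all real λ ≥ 0. -/

import Mathlib

/-!
Write `m = exp ∘ φ` with `φ(l) = -(β/2) log(l² + ρ²) + i (l² + ρ²)^(α/2)`. Since `Re β ≥ 0`,
`Re φ ≤ -(Re β/2) log ρ²`, so every derivative of `exp` is bounded by one constant `C` along `φ`.
The functions `(l² + ρ²)^(α/2)` and `(log(l² + ρ²))' = 2l (l² + ρ²)⁻¹` are finite sums of terms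
`c l^a (l² + ρ²)^b`, homogeneous of degree `t = a + 2b` in `(l, ρ)`; differentiation keeps this
form and lowers `t` by one, and such a sum is `O((1 + l²)^(t/2))` because `|l| ≤ (l² + ρ²)^(1/2)`.
Hence `‖φ^(j)(l)‖ ≤ D^j` for `1 ≤ j ≤ k`, with `D = K (1 + l²)^(-(1-α)/2)`, and the Faà di Bruno
bound `‖(exp ∘ φ)^(k)‖ ≤ k! C D^k` finishes the proof.
-/

open Complex Asymptotics Filter

lemma norm_iteratedFDeriv_real_cexp (n : ℕ) (z : ℂ) :
    ‖iteratedFDeriv ℝ n cexp z‖ = ‖cexp z‖ := by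
  rw [← (contDiff_exp (n := n)).contDiffAt.restrictScalars_iteratedFDeriv (𝕜 := ℝ) (𝕜' := ℂ),
    Function.comp_apply, ContinuousMultilinearMap.norm_restrictScalars,
    norm_iteratedFDeriv_eq_norm_iteratedDeriv, iteratedDeriv_eq_iterate, iter_deriv_exp]

lemma exists_forall_norm_le_pow_of_isBigO {X E : Type*} [NormedAddCommGroup E] {f : ℕ → X → E}
    {w : X → ℝ} (hw : ∀ x, 0 ≤ w x) (k : ℕ) (hf : ∀ i, 1 ≤ i → f i =O[⊤] fun x => w x ^ i) :
    ∃ K, 0 < K ∧ ∀ i, 1 ≤ i → i ≤ k → ∀ x, ‖f i x‖ ≤ (K * w x) ^ i := by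
  have hev : ∀ i ∈ Finset.Icc 1 k, ∀ᶠ K in atTop, ∀ x, ‖f i x‖ ≤ (K * w x) ^ i := by
    intro i hi
    have hi1 := (Finset.mem_Icc.1 hi).1
    obtain ⟨C, hC⟩ := isBigO_top.1 (hf i hi1)
    filter_upwards [eventually_ge_atTop (max C 1)] with K hK x
    calc ‖f i x‖ ≤ C * ‖w x ^ i‖ := hC x
      _ ≤ K ^ i * w x ^ i := by
        rw [Real.norm_of_nonneg (pow_nonneg (hw x) i)]
        refine mul_le_mul_of_nonneg_right ?_ (pow_nonneg (hw x) i)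
        exact (le_max_left _ _).trans <| hK.trans <|
          le_self_pow₀ ((le_max_right _ _).trans hK) (Nat.one_le_iff_ne_zero.1 hi1)
      _ = (K * w x) ^ i := (mul_pow _ _ _).symm
  obtain ⟨K, hK0, hK⟩ := ((eventually_gt_atTop 0).and ((eventually_all_finset _).2 hev)).exists
  exact ⟨K, hK0, fun i h1 hk => hK i (Finset.mem_Icc.2 ⟨h1, hk⟩)⟩

lemma abs_pow_le_rpow_sq_add_sq (l ρ : ℝ) (a : ℕ) :
    |l| ^ a ≤ (l ^ 2 + ρ ^ 2) ^ ((a : ℝ) / 2) := by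
  have h : |l| ≤ √(l ^ 2 + ρ ^ 2) := by
    rw [← Real.sqrt_sq_eq_abs]
    exact Real.sqrt_le_sqrt (le_add_of_nonneg_right (sq_nonneg ρ))
  calc |l| ^ a ≤ √(l ^ 2 + ρ ^ 2) ^ a := by gcongr
    _ = (l ^ 2 + ρ ^ 2) ^ ((a : ℝ) / 2) := by
      rw [Real.sqrt_eq_rpow, ← Real.rpow_natCast, ← Real.rpow_mul (by positivity)]
      ring_nf

lemma isTheta_sq_add_sq_one_add_sq {ρ : ℝ} (hρ : ρ ≠ 0) :
    (fun l : ℝ => l ^ 2 + ρ ^ 2) =Θ[⊤] fun l => 1 + l ^ 2 := by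
  have hρ2 : 0 < ρ ^ 2 := by positivity
  refine ⟨.of_bound (1 + ρ ^ 2) (.of_forall fun l => ?_),
    .of_bound (1 + (ρ ^ 2)⁻¹) (.of_forall fun l => ?_)⟩
  all_goals
    rw [Real.norm_of_nonneg (by positivity), Real.norm_of_nonneg (by positivity)]
  · nlinarith [sq_nonneg l]
  · have : (ρ ^ 2)⁻¹ * ρ ^ 2 = 1 := inv_mul_cancel₀ hρ2.ne'
    nlinarith [sq_nonneg l, inv_pos.2 hρ2]

lemma isBigO_rpow_sq_add_sq {ρ : ℝ} (hρ : ρ ≠ 0) (s : ℝ) :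
    (fun l : ℝ => (l ^ 2 + ρ ^ 2) ^ s) =O[⊤] fun l => (1 + l ^ 2) ^ s :=
  ((isTheta_sq_add_sq_one_add_sq hρ).rpow (.of_forall fun l => by positivity)
    (.of_forall fun l => by positivity)).isBigO

lemma isBigO_one_add_sq_rpow {s s' : ℝ} (h : s ≤ s') :
    (fun l : ℝ => (1 + l ^ 2) ^ s) =O[⊤] fun l => (1 + l ^ 2) ^ s' :=
  .of_bound' (.of_forall fun l => by
    rw [Real.norm_of_nonneg (by positivity), Real.norm_of_nonneg (by positivity)]
    exact Real.rpow_le_rpow_of_exponent_le (by nlinarith [sq_nonneg l]) h)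

lemma hasDerivAt_sq_add_sq (ρ l : ℝ) : HasDerivAt (fun l : ℝ => l ^ 2 + ρ ^ 2) (2 * l) l := by
  simpa using (hasDerivAt_pow 2 l).add_const (ρ ^ 2)

lemma hasDerivAt_mul_pow_mul_rpow {ρ : ℝ} (hρ : ρ ≠ 0) (c : ℝ) (a : ℕ) (b l : ℝ) :
    HasDerivAt (fun l : ℝ => c * l ^ a * (l ^ 2 + ρ ^ 2) ^ b)
      (c * a * l ^ (a - 1) * (l ^ 2 + ρ ^ 2) ^ b
        + 2 * c * b * l ^ (a + 1) * (l ^ 2 + ρ ^ 2) ^ (b - 1)) l := by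
  have hXb := (hasDerivAt_sq_add_sq ρ l).rpow_const (p := b) (Or.inl (by positivity))
  exact (((hasDerivAt_pow a l).const_mul c).fun_mul hXb).congr_deriv (by rw [pow_succ l a]; ring)

/-- Terms with `c j = 0` may have any degree: differentiating `l ^ 0` produces such a term. -/
def IsHomogeneousSum (ρ t : ℝ) (g : ℝ → ℝ) : Prop :=
  ∃ (ι : Type) (_ : Fintype ι) (c : ι → ℝ) (a : ι → ℕ) (b : ι → ℝ),
    (∀ j, c j ≠ 0 → (a j : ℝ) + 2 * b j = t) ∧
    g = fun l => ∑ j, c j * l ^ a j * (l ^ 2 + ρ ^ 2) ^ b j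

namespace IsHomogeneousSum

variable {ρ t : ℝ} {g : ℝ → ℝ}

lemma deriv (hρ : ρ ≠ 0) (hg : IsHomogeneousSum ρ t g) :
    IsHomogeneousSum ρ (t - 1) (deriv g) := by
  obtain ⟨ι, _, c, a, b, hdeg, rfl⟩ := hg
  refine ⟨ι ⊕ ι, inferInstance, Sum.elim (fun j => c j * a j) (fun j => 2 * c j * b j),
    Sum.elim (fun j => a j - 1) (fun j => a j + 1), Sum.elim b (fun j => b j - 1), ?_, ?_⟩
  · rintro (j | j) hc
    · have ha : 1 ≤ a j := Nat.one_le_iff_ne_zero.2 fun h => hc (by simp [h])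
      have := hdeg j fun h => hc (by simp [h])
      simp only [Sum.elim_inl, Nat.cast_sub ha]
      push_cast
      linarith
    · have := hdeg j fun h => hc (by simp [h])
      simp only [Sum.elim_inr]
      push_cast
      linarith
  · funext l
    rw [(HasDerivAt.fun_sum fun j _ => hasDerivAt_mul_pow_mul_rpow hρ (c j) (a j) (b j) l).deriv,
      Fintype.sum_sum_type, ← Finset.sum_add_distrib]
    simp only [Sum.elim_inl, Sum.elim_inr]

lemma iteratedDeriv (hρ : ρ ≠ 0) (hg : IsHomogeneousSum ρ t g) (n : ℕ) :
    IsHomogeneousSum ρ (t - n) (iteratedDeriv n g) := by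
  induction n with
  | zero => simpa using hg
  | succ n ih =>
    rw [iteratedDeriv_succ, Nat.cast_succ, ← sub_sub]
    exact ih.deriv hρ

lemma isBigO (hρ : ρ ≠ 0) (hg : IsHomogeneousSum ρ t g) :
    g =O[⊤] fun l => (l ^ 2 + ρ ^ 2) ^ (t / 2) := by
  obtain ⟨ι, _, c, a, b, hdeg, rfl⟩ := hg
  refine IsBigO.fun_sum fun j _ => .of_bound |c j| (.of_forall fun l => ?_)
  have hX : 0 < l ^ 2 + ρ ^ 2 := by positivity
  rcases eq_or_ne (c j) 0 with hc | hc
  · simp [hc]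
  rw [norm_mul, norm_mul, norm_pow, Real.norm_eq_abs, Real.norm_eq_abs,
    Real.norm_of_nonneg (by positivity), Real.norm_of_nonneg (by positivity), mul_assoc]
  gcongr
  calc |l| ^ a j * (l ^ 2 + ρ ^ 2) ^ b j
      ≤ (l ^ 2 + ρ ^ 2) ^ ((a j : ℝ) / 2) * (l ^ 2 + ρ ^ 2) ^ b j := by
        gcongr
        exact abs_pow_le_rpow_sq_add_sq l ρ (a j)
    _ = (l ^ 2 + ρ ^ 2) ^ (t / 2) := by
        rw [← Real.rpow_add hX, ← hdeg j hc]
        ring_nf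

end IsHomogeneousSum

lemma isHomogeneousSum_rpow_sq_add_sq (ρ s : ℝ) :
    IsHomogeneousSum ρ s fun l => (l ^ 2 + ρ ^ 2) ^ (s / 2) :=
  ⟨Unit, inferInstance, fun _ => 1, fun _ => 0, fun _ => s / 2, fun _ _ => by push_cast; ring,
    by simp⟩

lemma isHomogeneousSum_deriv_log_sq_add_sq {ρ : ℝ} (hρ : ρ ≠ 0) :
    IsHomogeneousSum ρ (-1) (deriv fun l => Real.log (l ^ 2 + ρ ^ 2)) := by
  refine ⟨Unit, inferInstance, fun _ => 2, fun _ => 1, fun _ => -1, fun _ _ => by push_cast; ring,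
    funext fun l => ?_⟩
  rw [((hasDerivAt_sq_add_sq ρ l).log (by positivity)).deriv]
  simp [Real.rpow_neg_one, div_eq_mul_inv]

noncomputable def phase (ρ α : ℝ) (β : ℂ) : ℝ → ℂ := fun l =>
  Real.log (l ^ 2 + ρ ^ 2) • (-(β / 2)) + (l ^ 2 + ρ ^ 2) ^ (α / 2) • I

section phase

variable {ρ α : ℝ} {β : ℂ}

lemma contDiff_log_sq_add_sq (hρ : ρ ≠ 0) {n : WithTop ℕ∞} :
    ContDiff ℝ n fun l : ℝ => Real.log (l ^ 2 + ρ ^ 2) :=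
  (contDiff_id.pow 2 |>.add contDiff_const).log fun l => by positivity

lemma contDiff_rpow_sq_add_sq (hρ : ρ ≠ 0) (s : ℝ) {n : WithTop ℕ∞} :
    ContDiff ℝ n fun l : ℝ => (l ^ 2 + ρ ^ 2) ^ s :=
  (contDiff_id.pow 2 |>.add contDiff_const).rpow_const_of_ne fun l => by positivity

lemma contDiff_phase (hρ : ρ ≠ 0) {n : WithTop ℕ∞} : ContDiff ℝ n (phase ρ α β) :=
  ((contDiff_log_sq_add_sq hρ).smul contDiff_const).add
    ((contDiff_rpow_sq_add_sq hρ _).smul contDiff_const)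

lemma iteratedDeriv_phase (hρ : ρ ≠ 0) (n : ℕ) (l : ℝ) :
    iteratedDeriv n (phase ρ α β) l =
      iteratedDeriv n (fun l => Real.log (l ^ 2 + ρ ^ 2)) l • (-(β / 2))
        + iteratedDeriv n (fun l => (l ^ 2 + ρ ^ 2) ^ (α / 2)) l • I := by
  have hL : ContDiffAt ℝ n (fun l => Real.log (l ^ 2 + ρ ^ 2) • (-(β / 2))) l :=
    ((contDiff_log_sq_add_sq hρ).smul contDiff_const).contDiffAt
  have hv : ContDiffAt ℝ n (fun l => (l ^ 2 + ρ ^ 2) ^ (α / 2) • I) l :=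
    ((contDiff_rpow_sq_add_sq hρ _).smul contDiff_const).contDiffAt
  unfold phase
  rw [iteratedDeriv_fun_add hL hv, iteratedDeriv_smul_const (contDiff_log_sq_add_sq hρ).contDiffAt,
    iteratedDeriv_smul_const (contDiff_rpow_sq_add_sq hρ _).contDiffAt]

lemma cexp_phase (hρ : ρ ≠ 0) (l : ℝ) :
    cexp (phase ρ α β l) = ((l : ℂ) ^ 2 + (ρ : ℂ) ^ 2) ^ (-β / 2) *
      cexp (I * ((l : ℂ) ^ 2 + (ρ : ℂ) ^ 2) ^ ((α : ℂ) / 2)) := by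
  have hX : 0 < l ^ 2 + ρ ^ 2 := by positivity
  have hcast : (l : ℂ) ^ 2 + (ρ : ℂ) ^ 2 = ((l ^ 2 + ρ ^ 2 : ℝ) : ℂ) := by push_cast; ring
  have hrpow : ((l ^ 2 + ρ ^ 2 : ℝ) : ℂ) ^ ((α : ℂ) / 2) = ((l ^ 2 + ρ ^ 2) ^ (α / 2) : ℝ) := by
    rw [ofReal_cpow hX.le]
    push_cast
    rfl
  rw [hcast, hrpow, cpow_def_of_ne_zero (ofReal_ne_zero.2 hX.ne'), ← ofReal_log hX.le, phase,
    exp_add, real_smul, real_smul]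
  ring_nf

lemma norm_cexp_phase_le (hρ : ρ ≠ 0) (hβ : 0 ≤ β.re) (l : ℝ) :
    ‖cexp (phase ρ α β l)‖ ≤ Real.exp (-(β.re / 2) * Real.log (ρ ^ 2)) := by
  have hX : ρ ^ 2 ≤ l ^ 2 + ρ ^ 2 := le_add_of_nonneg_left (sq_nonneg l)
  rw [norm_exp, phase, add_re, smul_re, smul_re, I_re, smul_zero, add_zero, neg_re, div_ofNat_re,
    smul_eq_mul, Real.exp_le_exp, mul_comm]
  exact mul_le_mul_of_nonpos_left (Real.log_le_log (by positivity) hX) (by linarith)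

lemma isBigO_iteratedDeriv_phase (hρ : ρ ≠ 0) (hα : 0 ≤ α) {n : ℕ} (hn : 1 ≤ n) :
    iteratedDeriv n (phase ρ α β) =O[⊤] fun l => ((1 + l ^ 2) ^ (-(1 - α) / 2)) ^ n := by
  obtain ⟨n, rfl⟩ := Nat.exists_eq_add_of_le' hn
  have hsmul (f : ℝ → ℝ) (c : ℂ) : (fun l => f l • c) =O[⊤] f :=
    .of_bound ‖c‖ (.of_forall fun l => by rw [norm_smul, mul_comm])
  have hlog : iteratedDeriv (n + 1) (fun l => Real.log (l ^ 2 + ρ ^ 2)) =O[⊤]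
      fun l => (1 + l ^ 2) ^ ((α - (n + 1 : ℕ)) / 2) := by
    have := ((isHomogeneousSum_deriv_log_sq_add_sq hρ).iteratedDeriv hρ n).isBigO hρ
    rw [← iteratedDeriv_succ'] at this
    exact this.trans (isBigO_rpow_sq_add_sq hρ _) |>.trans
      (isBigO_one_add_sq_rpow (by push_cast; linarith))
  have hv : iteratedDeriv (n + 1) (fun l => (l ^ 2 + ρ ^ 2) ^ (α / 2)) =O[⊤]
      fun l => (1 + l ^ 2) ^ ((α - (n + 1 : ℕ)) / 2) :=
    ((isHomogeneousSum_rpow_sq_add_sq ρ α).iteratedDeriv hρ (n + 1)).isBigO hρ |>.trans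
      (isBigO_rpow_sq_add_sq hρ _)
  have hpow : (fun l : ℝ => (1 + l ^ 2) ^ ((α - (n + 1 : ℕ)) / 2)) =O[⊤]
      fun l => ((1 + l ^ 2) ^ (-(1 - α) / 2)) ^ (n + 1) := by
    refine (isBigO_one_add_sq_rpow (s' := -(1 - α) / 2 * (n + 1 : ℕ)) ?_).congr_right
      fun l => Real.rpow_mul_natCast (by positivity) _ _
    push_cast
    nlinarith
  rw [funext (iteratedDeriv_phase hρ (n + 1))]
  exact ((hsmul _ _).trans hlog |>.add ((hsmul _ _).trans hv)).trans hpow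

end phase

theorem stmt_0 (α : ℝ) (hα : α ∈ Set.Ioo (0:ℝ) 1) (β : ℂ) (hβ : 0 ≤ β.re)
    (ρ : ℝ) (hρ : 0 < ρ) (m : ℝ → ℂ)
    (hm : ∀ l : ℝ, m l = ((l:ℂ)^2 + (ρ:ℂ)^2) ^ (-β/2) *
      Complex.exp (Complex.I * (((l:ℂ)^2 + (ρ:ℂ)^2) ^ ((α:ℂ)/2)))) :
    ∀ k : ℕ, ∃ c : ℝ, 0 < c ∧ ∀ l : ℝ, 0 ≤ l →
      ‖iteratedDeriv k m l‖ ≤ c * (1 + l^2) ^ (-((k:ℝ) * (1 - α)) / 2) := by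
  intro k
  have hm' : m = cexp ∘ phase ρ α β :=
    funext fun l => by rw [hm, Function.comp_apply, cexp_phase hρ.ne']
  obtain ⟨K, hK0, hK⟩ := exists_forall_norm_le_pow_of_isBigO
    (fun l => by positivity : ∀ l : ℝ, 0 ≤ (1 + l ^ 2) ^ (-(1 - α) / 2)) k
    fun i hi => isBigO_iteratedDeriv_phase (β := β) hρ.ne' hα.1.le hi
  obtain ⟨C, hC0, hC⟩ : ∃ C, 0 < C ∧ ∀ l, ‖cexp (phase ρ α β l)‖ ≤ C :=
    ⟨_, Real.exp_pos _, norm_cexp_phase_le hρ.ne' hβ⟩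
  refine ⟨k.factorial * C * K ^ k, by positivity, fun l _ => ?_⟩
  have hfaa := norm_iteratedFDeriv_comp_le ((contDiff_exp (𝕜 := ℂ)).restrict_scalars ℝ)
    (contDiff_phase hρ.ne') le_rfl l
    (fun i _ => (norm_iteratedFDeriv_real_cexp i _).trans_le (hC l))
    fun i h1 hk => (norm_iteratedFDeriv_eq_norm_iteratedDeriv).trans_le (hK i h1 hk l)
  rw [← norm_iteratedFDeriv_eq_norm_iteratedDeriv, hm']
  refine hfaa.trans_eq ?_
  rw [mul_pow, ← Real.rpow_mul_natCast (by positivity),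
    show -(1 - α) / 2 * (k : ℝ) = -(k * (1 - α)) / 2 by ring]
  ring
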